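/- Let U ⊆ ℝ² be open, let H₁, …, H_n : ℝ² → ℝ be differentiable functions, and let λ_{ij}^k (i,j,k = 1,…,n) be real constants such that {H_i, H_j}(z) = Σ_{k=1}^n λ_{ij}^k H_k(z) for all z ∈ U and all i,j. Let β₁, …, β_n be real numbers that are central for the structure constants, i.e. Σ_{j=1}^n λ_{ij}^k β_j = 0 for all i and k. Then for every choice of functions b₁, …, b_n : ℝ → ℝ and every differentiable curve z(t) = (q(t), p(t)) in U solving q′(t) = Σ_{i=1}^n b_i(t)(∂H_i/∂p)(z(t)), p′(t) = −Σ_{i=1}^n b_i(t)(∂H_i/∂q)(z(t)), the time-independent function t ↦ Σ_{k=1}^n β_k H_k(z(t)) is constant on ℝ. -/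

import Mathlib

/-- The Poisson bracket of two functions on `ℝ²` (coordinates `z = (q, p)`):
`{f, g}(z) = (∂f/∂p)(z)·(∂g/∂q)(z) − (∂f/∂q)(z)·(∂g/∂p)(z)`. -/
noncomputable def poissonBracket (f g : ℝ × ℝ → ℝ) (z : ℝ × ℝ) : ℝ :=
  fderiv ℝ f z (0, 1) * fderiv ℝ g z (1, 0) - fderiv ℝ f z (1, 0) * fderiv ℝ g z (0, 1)

/-!
Along a solution of `z′ = Σᵢ bᵢ(t) X_{Hᵢ}(z)` the derivative of `G(z(t))` is
`Σᵢ bᵢ(t) {Hᵢ, G}(z(t))`. For `G = Σₖ βₖ Hₖ` the closure relations give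
`{Hᵢ, G} = Σₘ (Σₖ λᵢₖᵐ βₖ) Hₘ`, which vanishes by centrality of `β`; so `G ∘ z` has
derivative zero everywhere and is constant.
-/

open Finset

noncomputable def hamiltonianVectorField (f : ℝ × ℝ → ℝ) (z : ℝ × ℝ) : ℝ × ℝ :=
  (fderiv ℝ f z (0, 1), -fderiv ℝ f z (1, 0))

theorem fderiv_apply_hamiltonianVectorField (f g : ℝ × ℝ → ℝ) (z : ℝ × ℝ) :
    fderiv ℝ g z (hamiltonianVectorField f z) = poissonBracket f g z := by
  have hsplit : hamiltonianVectorField f z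
      = fderiv ℝ f z (0, 1) • ((1, 0) : ℝ × ℝ) + (-fderiv ℝ f z (1, 0)) • ((0, 1) : ℝ × ℝ) := by
    simp [hamiltonianVectorField]
  rw [hsplit, map_add, map_smul, map_smul, poissonBracket, smul_eq_mul, smul_eq_mul]
  ring

theorem HasDerivAt.comp_hamiltonianVectorField_sum {ι : Type*} [Fintype ι]
    {H : ι → ℝ × ℝ → ℝ} {b : ι → ℝ → ℝ} {z : ℝ → ℝ × ℝ} {g : ℝ × ℝ → ℝ} {t : ℝ}
    (hz : HasDerivAt z (∑ i, b i t • hamiltonianVectorField (H i) (z t)) t)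
    (hg : DifferentiableAt ℝ g (z t)) :
    HasDerivAt (fun s => g (z s)) (∑ i, b i t * poissonBracket (H i) g (z t)) t := by
  have h : HasDerivAt (fun s => g (z s))
      (fderiv ℝ g (z t) (∑ i, b i t • hamiltonianVectorField (H i) (z t))) t :=
    hg.hasFDerivAt.comp_hasDerivAt t hz
  simpa only [map_sum, map_smul, smul_eq_mul, fderiv_apply_hamiltonianVectorField] using h

theorem sum_mul_poissonBracket_eq_zero_of_central {ι : Type*} [Fintype ι]
    {H : ι → ℝ × ℝ → ℝ} {lam : ι → ι → ι → ℝ} {β : ι → ℝ} {z : ℝ × ℝ}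
    (hlam : ∀ i j, poissonBracket (H i) (H j) z = ∑ k, lam i j k * H k z)
    (hβ : ∀ i k, ∑ j, lam i j k * β j = 0) (i : ι) :
    ∑ k, β k * poissonBracket (H i) (H k) z = 0 := by
  calc ∑ k, β k * poissonBracket (H i) (H k) z
      = ∑ m, H m z * ∑ k, lam i k m * β k := by
        simp only [hlam, mul_sum]
        rw [sum_comm]
        exact sum_congr rfl fun _ _ => sum_congr rfl fun _ _ => by ring
    _ = 0 := by simp [hβ]

theorem central_combination_is_first_integral_general
    {n : ℕ} (U : Set (ℝ × ℝ))
    (H : Fin n → ℝ × ℝ → ℝ) (hH : ∀ i, Differentiable ℝ (H i))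
    (lam : Fin n → Fin n → Fin n → ℝ)
    (hlam : ∀ i j, ∀ z ∈ U,
      poissonBracket (H i) (H j) z = ∑ k, lam i j k * H k z)
    (β : Fin n → ℝ)
    (hβ : ∀ i k, ∑ j, lam i j k * β j = 0) :
    ∀ (b : Fin n → ℝ → ℝ) (z : ℝ → ℝ × ℝ), (∀ t : ℝ, z t ∈ U) →
      (∀ t : ℝ, HasDerivAt z
        (∑ i, b i t • (fderiv ℝ (H i) (z t) (0, 1), -(fderiv ℝ (H i) (z t) (1, 0)))) t) →
      ∀ t : ℝ, ∑ k, β k * H k (z t) = ∑ k, β k * H k (z 0) := by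
  intro b z hzU hz t
  have hderiv : ∀ s, HasDerivAt (fun t => ∑ k, β k * H k (z t)) 0 s := by
    intro s
    have h := HasDerivAt.fun_sum fun k (_ : k ∈ univ) =>
      ((hz s).comp_hamiltonianVectorField_sum (hH k (z s))).const_mul (β k)
    suffices h0 : ∑ k, β k * ∑ i, b i s * poissonBracket (H i) (H k) (z s) = 0 by
      rwa [h0] at h
    calc ∑ k, β k * ∑ i, b i s * poissonBracket (H i) (H k) (z s)
        = ∑ i, b i s * ∑ k, β k * poissonBracket (H i) (H k) (z s) := by
          simp only [mul_sum]
          rw [sum_comm]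
          exact sum_congr rfl fun _ _ => sum_congr rfl fun _ _ => by ring
      _ = 0 := by
          simp [sum_mul_poissonBracket_eq_zero_of_central (hlam · · _ (hzU s)) hβ]
  exact is_const_of_deriv_eq_zero (fun s => (hderiv s).differentiableAt)
    (fun s => (hderiv s).deriv) t 0

/-- Let `U ⊆ ℝ²` be open, `H₁, …, Hₙ : ℝ² → ℝ` differentiable
functions whose Poisson brackets close on `U` with structure constants
`lam i j k`, and let `β₁, …, βₙ` be real numbers central for the structure
constants, i.e. `Σⱼ lam i j k · βⱼ = 0` for all `i, k`.  Then for every choice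
of coefficient functions `b₁, …, bₙ` and every differentiable curve `z(t)` in
`U` solving `q′ = Σᵢ bᵢ(t) ∂Hᵢ/∂p`, `p′ = −Σᵢ bᵢ(t) ∂Hᵢ/∂q`, the
time-independent function `t ↦ Σₖ βₖ Hₖ(z(t))` is constant on `ℝ`. -/
theorem central_combination_is_first_integral
    {n : ℕ} (U : Set (ℝ × ℝ)) (hU : IsOpen U)
    (H : Fin n → ℝ × ℝ → ℝ) (hH : ∀ i, Differentiable ℝ (H i))
    (lam : Fin n → Fin n → Fin n → ℝ)
    (hlam : ∀ i j, ∀ z ∈ U,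
      poissonBracket (H i) (H j) z = ∑ k, lam i j k * H k z)
    (β : Fin n → ℝ)
    (hβ : ∀ i k, ∑ j, lam i j k * β j = 0) :
    ∀ (b : Fin n → ℝ → ℝ) (z : ℝ → ℝ × ℝ), (∀ t : ℝ, z t ∈ U) →
      (∀ t : ℝ, HasDerivAt z
        (∑ i, b i t • (fderiv ℝ (H i) (z t) (0, 1), -(fderiv ℝ (H i) (z t) (1, 0)))) t) →
      ∀ t : ℝ, ∑ k, β k * H k (z t) = ∑ k, β k * H k (z 0) :=
  central_combination_is_first_integral_general U H hH lam hlam β hβ
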